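/- arXiv:0802.0579 — 8 statements merged into one kernel-verified Lean document; each statement's English description precedes it below -/
import Mathlib

section
/- Let ω > 0 and q = 2ω/(1+ω) (equivalently ω = q/(2-q)), with 0 < q < 2. Then the two polynomials Z² - (2-q)Z + 1 and (1+ω)Z² - 2Z + (1+ω) are proportional, so the quartic (Z² - (2-q)Z + 1)((1+ω)Z² - 2Z + (1+ω)) has two double roots, namely (2-q ± i√(q(4-q)))/2, each of modulus 1. -/
/-!
The relation q = 2ω/(1+ω) is exactly (1+ω)(2-q) = 2, which makes the second quadratic
(1+ω) times the first. The first quadratic Z² - (2-q)Z + 1 has discriminant -q(4-q) ≤ 0, so its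
roots are the conjugate pair ((2-q) ± i√(q(4-q)))/2, whose product is 1, hence both lie on the
unit circle.
-/

open Complex

lemma mul_quadratic_eq_of_mul_eq_two {R : Type*} [CommRing R] {c b : R} (h : c * b = 2) (Z : R) :
    c * (Z ^ 2 - b * Z + 1) = c * Z ^ 2 - 2 * Z + c := by
  linear_combination (-Z) * h

lemma quadratic_eq_mul_sub_mul_sub {a s : ℝ} (h : a ^ 2 + s ^ 2 = 4) (Z : ℂ) :
    Z ^ 2 - a * Z + 1 = (Z - (a + I * s) / 2) * (Z - (a - I * s) / 2) := by
  have hC : (a : ℂ) ^ 2 + (s : ℂ) ^ 2 = 4 := by exact_mod_cast h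
  linear_combination ((s : ℂ) ^ 2 / 4) * I_sq - (1 / 4 : ℂ) * hC

lemma norm_add_I_mul_div_two_eq_one {a s : ℝ} (h : a ^ 2 + s ^ 2 = 4) :
    ‖((a : ℂ) + I * s) / 2‖ = 1 := by
  rw [norm_div, mul_comm, norm_add_mul_I, h, show (4 : ℝ) = 2 ^ 2 by norm_num,
    Real.sqrt_sq zero_le_two]
  norm_num

lemma norm_sub_I_mul_div_two_eq_one {a s : ℝ} (h : a ^ 2 + s ^ 2 = 4) :
    ‖((a : ℂ) - I * s) / 2‖ = 1 := by
  have h' : a ^ 2 + (-s) ^ 2 = 4 := by rw [neg_sq]; exact h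
  simpa [sub_eq_add_neg] using norm_add_I_mul_div_two_eq_one h'

theorem stmt_9 (ω q : ℝ) (hω : 0 < ω) (hq : q = 2 * ω / (1 + ω)) (hq0 : 0 < q) (hq2 : q < 2) :
    (∀ Z : ℂ, ((1 + ω : ℝ) : ℂ) * (Z ^ 2 - (2 - (q : ℂ)) * Z + 1)
        = ((1 + ω : ℝ) : ℂ) * Z ^ 2 - 2 * Z + ((1 + ω : ℝ) : ℂ)) ∧
    (∀ Z : ℂ,
      (Z ^ 2 - (2 - (q : ℂ)) * Z + 1) * (((1 + ω : ℝ) : ℂ) * Z ^ 2 - 2 * Z + ((1 + ω : ℝ) : ℂ))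
        = ((1 + ω : ℝ) : ℂ) *
            (Z - (((2 - q : ℝ) : ℂ) + Complex.I * ((Real.sqrt (q * (4 - q)) : ℝ) : ℂ)) / 2) ^ 2 *
            (Z - (((2 - q : ℝ) : ℂ) - Complex.I * ((Real.sqrt (q * (4 - q)) : ℝ) : ℂ)) / 2) ^ 2) ∧
    ‖(((2 - q : ℝ) : ℂ) + Complex.I * ((Real.sqrt (q * (4 - q)) : ℝ) : ℂ)) / 2‖ = 1 ∧
    ‖(((2 - q : ℝ) : ℂ) - Complex.I * ((Real.sqrt (q * (4 - q)) : ℝ) : ℂ)) / 2‖ = 1 := by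
  have hkey : ((1 + ω : ℝ) : ℂ) * (2 - (q : ℂ)) = 2 := by
    have : (1 + ω) * (2 - q) = 2 := by rw [hq]; field_simp; ring
    exact_mod_cast this
  have hsum : (2 - q) ^ 2 + Real.sqrt (q * (4 - q)) ^ 2 = 4 := by
    rw [Real.sq_sqrt (by nlinarith)]; ring
  have hfactor := quadratic_eq_mul_sub_mul_sub hsum
  push_cast at hfactor
  refine ⟨mul_quadratic_eq_of_mul_eq_two hkey, fun Z => ?_, norm_add_I_mul_div_two_eq_one hsum,
    norm_sub_I_mul_div_two_eq_one hsum⟩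
  rw [← mul_quadratic_eq_of_mul_eq_two hkey, hfactor]
  push_cast
  ring
end

section
/- Let ε > 1, q ∈ (0,2] and define f(ω) = -4ω²ε² + 8ωε + 4(ω(ε+1)+1)q - q² for real ω. Then f(ω) > 0 for all ω ∈ (0, 2/(2ε-1)]. -/
/-!
`f` is a concave quadratic in `ω`, so on `[0, 2 / (2ε - 1)]` it is bounded below by
its values at the endpoints. At `0` it equals `q (4 - q)`; at `ω = 2 / d` with `d = 2ε - 1` one
has `d² f(ω) = 16 ε (ε - 1) + q (d² (4 - q) + 8 d (ε + 1))`. Both are positive for `ε > 1`,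
`0 < q < 4`.
-/

open Set

lemma concaveOn_quadratic {a : ℝ} (ha : a ≤ 0) (b c : ℝ) :
    ConcaveOn ℝ univ fun x : ℝ => a * x ^ 2 + b * x + c := by
  refine ⟨convex_univ, fun x _ y _ s t hs ht hst => ?_⟩
  obtain rfl : t = 1 - s := by linarith
  simp only [smul_eq_mul]
  -- the concavity gap is exactly `-a s (1 - s) (x - y)²`
  nlinarith [mul_nonneg (mul_nonneg (neg_nonneg.2 ha) (mul_nonneg hs ht)) (sq_nonneg (x - y))]

/-- The function `f` of the von Neumann analysis of the harmonic Lorentz–Young scheme,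
`ψ₁*(0) + ψ₁(0) = 4 f(ω)`. -/
def lyQuadratic (ε q ω : ℝ) : ℝ :=
  -4 * ω ^ 2 * ε ^ 2 + 8 * ω * ε + 4 * (ω * (ε + 1) + 1) * q - q ^ 2

namespace lyQuadratic

lemma concaveOn (ε q : ℝ) : ConcaveOn ℝ univ (lyQuadratic ε q) := by
  convert concaveOn_quadratic (a := -4 * ε ^ 2) (by nlinarith [sq_nonneg ε])
    (8 * ε + 4 * (ε + 1) * q) (4 * q - q ^ 2) using 1
  funext ω
  simp only [lyQuadratic]
  ring

variable {ε q : ℝ}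

lemma zero_pos (hq0 : 0 < q) (hq4 : q < 4) : 0 < lyQuadratic ε q 0 := by
  simp only [lyQuadratic]
  nlinarith

lemma pos_at_bound (hε : 1 < ε) (hq0 : 0 < q) (hq4 : q < 4) :
    0 < lyQuadratic ε q (2 / (2 * ε - 1)) := by
  have hd : 0 < 2 * ε - 1 := by linarith
  have hscaled : (2 * ε - 1) ^ 2 * lyQuadratic ε q (2 / (2 * ε - 1)) =
      16 * ε * (ε - 1) + q * ((2 * ε - 1) ^ 2 * (4 - q) + 8 * (2 * ε - 1) * (ε + 1)) := by
    simp only [lyQuadratic]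
    field_simp
    ring
  have hε0 : 0 < ε := by linarith
  have hε1 : 0 < ε - 1 := by linarith
  have hq4' : 0 < 4 - q := by linarith
  refine pos_of_mul_pos_right (a := (2 * ε - 1) ^ 2) ?_ (by positivity)
  rw [hscaled]
  positivity

end lyQuadratic

theorem stmt_11 (ε q : ℝ) (hε : 1 < ε) (hq0 : 0 < q) (hq2 : q ≤ 2) :
    ∀ ω : ℝ, 0 < ω → ω ≤ 2 / (2 * ε - 1) →
      0 < -4 * ω ^ 2 * ε ^ 2 + 8 * ω * ε + 4 * (ω * (ε + 1) + 1) * q - q ^ 2 := by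
  intro ω hω hωT
  have hq4 : q < 4 := by linarith
  exact (lt_min (lyQuadratic.zero_pos hq0 hq4) (lyQuadratic.pos_at_bound hε hq0 hq4)).trans_le
    ((lyQuadratic.concaveOn ε q).min_le_of_mem_Icc trivial trivial ⟨hω.le, hωT⟩)
end

section
/- Let ε ≥ 1, ω > 0, and q ∈ (0,4). Set A = 32ε - 16(ε-1)q + (ε-1)(2+ω)q² and B = 32ε - 16εq + (ε-1)(2-ω)q². Then A > 0, A - B = 16q + 2(ε-1)ωq² > 0 and A + B > 0; consequently |B/A| < 1, i.e. the root of the linear polynomial AZ - B has modulus strictly less than 1. -/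
theorem stmt_13 (ε ω q : ℝ) (hε : 1 ≤ ε) (hω : 0 < ω) (hq0 : 0 < q) (hq4 : q < 4) :
    (0 < 32 * ε - 16 * (ε - 1) * q + (ε - 1) * (2 + ω) * q ^ 2) ∧
    ((32 * ε - 16 * (ε - 1) * q + (ε - 1) * (2 + ω) * q ^ 2) -
        (32 * ε - 16 * ε * q + (ε - 1) * (2 - ω) * q ^ 2)
      = 16 * q + 2 * (ε - 1) * ω * q ^ 2) ∧
    (0 < (32 * ε - 16 * (ε - 1) * q + (ε - 1) * (2 + ω) * q ^ 2) -
        (32 * ε - 16 * ε * q + (ε - 1) * (2 - ω) * q ^ 2)) ∧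
    (0 < (32 * ε - 16 * (ε - 1) * q + (ε - 1) * (2 + ω) * q ^ 2) +
        (32 * ε - 16 * ε * q + (ε - 1) * (2 - ω) * q ^ 2)) ∧
    |(32 * ε - 16 * ε * q + (ε - 1) * (2 - ω) * q ^ 2) /
        (32 * ε - 16 * (ε - 1) * q + (ε - 1) * (2 + ω) * q ^ 2)| < 1 := by
  have hA : 0 < 32 * ε - 16 * (ε - 1) * q + (ε - 1) * (2 + ω) * q ^ 2 := by
    nlinarith [mul_nonneg (sub_nonneg.mpr hε) (sq_nonneg (q - 4)), sq_nonneg q,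
      mul_nonneg (mul_nonneg (sub_nonneg.mpr hε) hω.le) (sq_nonneg q)]
  have hdiff : 0 < (32 * ε - 16 * (ε - 1) * q + (ε - 1) * (2 + ω) * q ^ 2) -
      (32 * ε - 16 * ε * q + (ε - 1) * (2 - ω) * q ^ 2) := by
    nlinarith [mul_nonneg (mul_nonneg (sub_nonneg.mpr hε) hω.le) (sq_nonneg q)]
  have hsum : 0 < (32 * ε - 16 * (ε - 1) * q + (ε - 1) * (2 + ω) * q ^ 2) +
      (32 * ε - 16 * ε * q + (ε - 1) * (2 - ω) * q ^ 2) := by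
    nlinarith [mul_nonneg (sub_nonneg.mpr hε) (sq_nonneg (q - 4))]
  refine ⟨hA, by ring, hdiff, hsum, ?_⟩
  rw [abs_div, abs_of_pos hA, div_lt_one hA, abs_lt]
  constructor <;> linarith
end

section
/- Let δ > 0 and s > 0. The quadratic (1+δ+s/2)Z² - (2-s)Z + (1-δ+s/2) has both roots of modulus strictly less than 1. -/
/-! Schur–Cohn (Jury) test for real quadratics: if `|c| < a` and `|b| < a + c`, every root of
`a z² + b z + c` lies in the open unit disc. A non-real root comes with its conjugate, and the
product of the two roots is `|z|² = c / a < 1`. A real root `x` satisfies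
`a x² + b x + c - x (a ± b + c) = (x ∓ 1)(a x ∓ c)`, which has the wrong sign when `±x ≥ 1`
because `a ± b + c > 0`. For the theorem, `a - c = 2δ`, `a + c - |b| = 2 + s - |2 - s| > 0`. -/

namespace RealQuadratic

variable {a b c : ℝ}

theorem abs_lt_one_of_eq_zero (hc : |c| < a) (hb : |b| < a + c) {x : ℝ}
    (hx : a * x ^ 2 + b * x + c = 0) : |x| < 1 := by
  obtain ⟨hca, hac⟩ := abs_lt.mp hc
  obtain ⟨hb₁, hb₂⟩ := abs_lt.mp hb
  refine abs_lt.mpr ⟨?_, ?_⟩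
  · by_contra! hx₁
    have : 0 ≤ (x + 1) * (a * x + c) := mul_nonneg_of_nonpos_of_nonpos (by linarith) (by nlinarith)
    nlinarith
  · by_contra! hx₁
    have : 0 ≤ (x - 1) * (a * x - c) := mul_nonneg (by linarith) (by nlinarith)
    nlinarith

theorem mul_normSq_eq_of_eq_zero_of_im_ne_zero {z : ℂ}
    (hz : (a : ℂ) * z ^ 2 + b * z + c = 0) (him : z.im ≠ 0) : a * Complex.normSq z = c := by
  have hre : a * (z.re ^ 2 - z.im ^ 2) + b * z.re + c = 0 := by
    simpa [sq, Complex.mul_re] using congrArg Complex.re hz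
  have him' : (2 * a * z.re + b) * z.im = 0 := by
    linear_combination (by simpa [sq, Complex.mul_im] using congrArg Complex.im hz : _ = _)
  have hb : b = -2 * a * z.re := by linarith [(mul_eq_zero.mp him').resolve_right him]
  rw [Complex.normSq_apply]
  subst hb
  linear_combination -hre

theorem norm_lt_one_of_eq_zero (hc : |c| < a) (hb : |b| < a + c) {z : ℂ}
    (hz : (a : ℂ) * z ^ 2 + b * z + c = 0) : ‖z‖ < 1 := by
  have ha : 0 < a := (abs_nonneg c).trans_lt hc
  suffices Complex.normSq z < 1 by
    rwa [Complex.normSq_eq_norm_sq, sq_lt_one_iff₀ (norm_nonneg z)] at this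
  rcases eq_or_ne z.im 0 with him | him
  · have hz_re : z = (z.re : ℂ) := Complex.ext rfl him
    rw [hz_re] at hz
    have hx : a * z.re ^ 2 + b * z.re + c = 0 := by exact_mod_cast hz
    rw [Complex.normSq_apply, him, mul_zero, add_zero, ← sq, sq_lt_one_iff_abs_lt_one]
    exact abs_lt_one_of_eq_zero hc hb hx
  · have := mul_normSq_eq_of_eq_zero_of_im_ne_zero hz him
    nlinarith [(abs_lt.mp hc).2]

end RealQuadratic

theorem stmt_14 (δ s : ℝ) (hδ : 0 < δ) (hs : 0 < s) :
    ∀ z : ℂ, ((1 + δ + s / 2 : ℝ) : ℂ) * z ^ 2 - ((2 - s : ℝ) : ℂ) * z +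
        ((1 - δ + s / 2 : ℝ) : ℂ) = 0 →
      ‖z‖ < 1 := by
  intro z hz
  refine RealQuadratic.norm_lt_one_of_eq_zero (a := 1 + δ + s / 2) (b := s - 2) (c := 1 - δ + s / 2)
    (abs_lt.mpr ⟨by linarith, by linarith⟩) (abs_lt.mpr ⟨by linarith, by linarith⟩) ?_
  push_cast at hz ⊢
  linear_combination hz
end

section
/- Let ε ≥ 1, ω ∈ (0, 2/(2ε-1)) and q ∈ (0,2). Set N = 2ε(2-ωε) - (ε-1)q - (2-ωε)q and D = 2ε(2-ωε) - (ε-1)q. Then D > 0 and |N| < D, i.e. the root N/D of the linear polynomial DZ - N has modulus strictly less than 1. -/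
/-! With `a = 2 - ωε` we have `D = 2εa - (ε-1)q` and `N = D - aq`, so `|N| < D` amounts to
`0 < aq < 2D`. The bound on `ω` gives `2(ε-1) < (2ε-1)a`, which is exactly what makes `D` and
`2D - aq` positive at `q = 2`; both are affine in `q` and positive at `q = 0` as well. -/

lemma abs_sub_lt_of_pos_of_lt_add {α : Type*} [AddCommGroup α] [LinearOrder α]
    [IsOrderedAddMonoid α] {d x : α} (hx : 0 < x) (h : x < d + d) : |d - x| < d :=
  abs_sub_lt_iff.2 ⟨by simpa using hx, sub_lt_iff_lt_add.2 h⟩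

lemma two_mul_sub_one_lt_mul_two_sub {ε ω : ℝ} (hε : 1 ≤ ε) (hω : ω < 2 / (2 * ε - 1)) :
    2 * (ε - 1) < (2 * ε - 1) * (2 - ω * ε) := by
  have hω' : ω * (2 * ε - 1) < 2 := (lt_div_iff₀ (by linarith)).1 hω
  nlinarith

theorem stmt_15_general (ε ω q : ℝ) (hε : 1 ≤ ε) (hω : ω < 2 / (2 * ε - 1))
    (hq0 : 0 < q) (hq2 : q < 2) :
    0 < 2 * ε * (2 - ω * ε) - (ε - 1) * q ∧
    |2 * ε * (2 - ω * ε) - (ε - 1) * q - (2 - ω * ε) * q|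
      < 2 * ε * (2 - ω * ε) - (ε - 1) * q := by
  set a := 2 - ω * ε
  have hkey := two_mul_sub_one_lt_mul_two_sub hε hω
  have ha : 0 < a := by nlinarith
  have hD : 0 < 2 * ε * a - (ε - 1) * q := by
    nlinarith [mul_le_mul_of_nonneg_left hq2.le (sub_nonneg.2 hε)]
  refine ⟨hD, abs_sub_lt_of_pos_of_lt_add (mul_pos ha hq0) ?_⟩
  nlinarith [mul_pos (sub_pos.2 hq2) (mul_pos (by linarith : (0 : ℝ) < ε) ha),
    mul_pos hq0 (sub_pos.2 hkey)]

theorem stmt_15 (ε ω q : ℝ) (hε : 1 ≤ ε) (hω0 : 0 < ω) (hω : ω < 2 / (2 * ε - 1))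
    (hq0 : 0 < q) (hq2 : q < 2) :
    0 < 2 * ε * (2 - ω * ε) - (ε - 1) * q ∧
    |2 * ε * (2 - ω * ε) - (ε - 1) * q - (2 - ω * ε) * q|
      < 2 * ε * (2 - ω * ε) - (ε - 1) * q :=
  stmt_15_general ε ω q hε hω hq0 hq2
end

section
/- Let ε ≥ 1, ω > 0, q ∈ (0,2] with ω ≤ 2/(2ε-1). Then (2ωε + q)(8 - (2ωε + q)) + 16ωq > 0 and ((2ω - q)² + 4ω(ε-1)(q + ω(ε+1))) ≥ 0, i.e. ψ₁*(0) + ψ₁(0) ≥ 0 and ψ₁*(0) - ψ₁(0) ≥ 0 for the harmonic Lorentz–Young analysis. -/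
/-! Since `ω ≤ 2 / (2ε - 1) ≤ 2`, we get `2ωε = ω(2ε - 1) + ω ≤ 4`, so `s = 2ωε + q` lies in
`(0, 6]` and `s (8 - s) + 16ωq` is positive. The second quantity is a square plus a product of
nonnegative factors. -/

lemma two_mul_mul_le_four_of_le_div {ε ω : ℝ} (hε : 1 ≤ ε) (hω : ω ≤ 2 / (2 * ε - 1)) :
    2 * ω * ε ≤ 4 := by
  have hω2 : ω ≤ 2 := hω.trans (div_le_self zero_le_two (by linarith))
  rw [le_div_iff₀ (by linarith)] at hω
  linarith

theorem stmt_16 (ε ω q : ℝ) (hε : 1 ≤ ε) (hω0 : 0 < ω) (hω : ω ≤ 2 / (2 * ε - 1))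
    (hq0 : 0 < q) (hq2 : q ≤ 2) :
    0 < (2 * ω * ε + q) * (8 - (2 * ω * ε + q)) + 16 * ω * q ∧
    0 ≤ (2 * ω - q) ^ 2 + 4 * ω * (ε - 1) * (q + ω * (ε + 1)) := by
  constructor
  · have hs : 0 < 2 * ω * ε + q := add_pos (mul_pos (by positivity) (by linarith)) hq0
    have hs8 : 2 * ω * ε + q < 8 := by linarith [two_mul_mul_le_four_of_le_div hε hω]
    exact add_pos (mul_pos hs (sub_pos.2 hs8)) (by positivity)
  · have hsum : 0 ≤ q + ω * (ε + 1) := add_nonneg hq0.le (mul_nonneg hω0.le (by linarith))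
    exact add_nonneg (sq_nonneg _) (mul_nonneg (mul_nonneg (by positivity) (sub_nonneg.2 hε)) hsum)
end

section
/- Let φ(z) = c₀ + c₁z + ... + c_p z^p be a polynomial over ℂ with c_p ≠ 0, let φ*(z) = c_p̄ + c_{p-1}̄ z + ... + c₀̄ z^p be its conjugate-reversed polynomial, and define φ₁(z) = (φ*(0)φ(z) - φ(0)φ*(z))/z. Then φ has all roots of modulus < 1 and exact degree d ≥ 1 if and only if φ₁ has all roots of modulus < 1, exact degree d-1, and |φ(0)| < |φ*(0)|. -/
/-!
Let all roots `r` of `f = c ∏ (X - r)` lie in the open unit disc and let `‖z‖ ≥ 1`. Since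
`f*(z) = z^(deg f) · conj (f (1 / z̄))`, we get `‖f*(z)‖ = ‖c‖ ∏ ‖1 - z̄ r‖`, and
`‖z - r‖² - ‖1 - z̄ r‖² = (‖z‖² - 1)(1 - ‖r‖²) ≥ 0` gives `‖f*(z)‖ ≤ ‖f(z)‖ ≠ 0`. Hence
`α f - β f*` has no root outside the open unit disc whenever `‖β‖ < ‖α‖`.

With `a = φ*(0)` and `b = φ(0)` we have `z φ₁ = a φ - b φ*`, which settles the forward direction;
conversely `φ` is a nonzero multiple of `ā (z φ₁) + b (z φ₁)*`, to which the same argument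
applies. The inequality `‖φ(0)‖ < ‖φ*(0)‖ = ‖lc φ‖` says that the product of the moduli of the
roots is `< 1`, and it makes the coefficient `‖lc φ‖² - ‖φ(0)‖²` of `z^(deg φ)` in `z φ₁`
nonzero, which fixes the degree of `φ₁`.
-/

open Polynomial

/-- The conjugate-reversed polynomial `φ*`: if `φ = c₀ + c₁ z + ⋯ + c_p z^p` then
`φ* = c_p̄ + c_{p-1}̄ z + ⋯ + c₀̄ z^p`. -/
noncomputable def conjReverse (φ : Polynomial ℂ) : Polynomial ℂ :=
  (φ.map (starRingEnd ℂ)).reverse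

/-- One step of the Schur recursion: `φ₁(z) = (φ*(0) φ(z) - φ(0) φ*(z)) / z`. -/
noncomputable def schurStep (φ : Polynomial ℂ) : Polynomial ℂ :=
  (C ((conjReverse φ).coeff 0) * φ - C (φ.coeff 0) * conjReverse φ).divX

/-- A Schur polynomial: all roots have modulus `< 1`. -/
def IsSchurPoly (φ : Polynomial ℂ) : Prop :=
  ∀ z : ℂ, φ.IsRoot z → ‖z‖ < 1

open ComplexConjugate

theorem norm_eval_eq_norm_leadingCoeff_mul_prod_roots {K : Type*} [NormedField K]
    [IsAlgClosed K] (q : K[X]) (y : K) :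
    ‖q.eval y‖ = ‖q.leadingCoeff‖ * (q.roots.map fun r => ‖y - r‖).prod := by
  rw [(IsAlgClosed.splits q).eval_eq_prod_roots, norm_mul,
    show ‖(q.roots.map (y - ·)).prod‖ = _ from map_multiset_prod (normHom : K →*₀ ℝ) _,
    Multiset.map_map]
  rfl

theorem Multiset.prod_map_norm_lt_one {K : Type*} [NormedField K] {s : Multiset K}
    (hs : s ≠ 0) (h : ∀ r ∈ s, ‖r‖ < 1) : (s.map (‖·‖)).prod < 1 := by
  obtain ⟨a, ha⟩ := exists_mem_of_ne_zero hs
  obtain ⟨t, rfl⟩ := exists_cons_of_mem ha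
  have ht : (t.map (‖·‖)).prod ≤ 1 := by
    simpa using prod_map_le_pow_card (f := (normHom : K →*₀ ℝ)) (r := 1)
      (fun x _ => norm_nonneg x) fun r hr => (h r (mem_cons_of_mem hr)).le
  rw [map_cons, prod_cons]
  calc ‖a‖ * (t.map (‖·‖)).prod ≤ ‖a‖ := mul_le_of_le_one_right (norm_nonneg a) ht
    _ < 1 := h a ha

theorem Complex.norm_one_sub_conj_mul_le_norm_sub {z r : ℂ} (hr : ‖r‖ ≤ 1) (hz : 1 ≤ ‖z‖) :
    ‖1 - conj z * r‖ ≤ ‖z - r‖ := by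
  have key : ‖z - r‖ ^ 2 - ‖1 - conj z * r‖ ^ 2 = (‖z‖ ^ 2 - 1) * (1 - ‖r‖ ^ 2) := by
    simp only [Complex.sq_norm, Complex.normSq_apply, Complex.sub_re, Complex.sub_im,
      Complex.mul_re, Complex.mul_im, Complex.conj_re, Complex.conj_im, Complex.one_re,
      Complex.one_im]
    ring
  have hnonneg : 0 ≤ (‖z‖ ^ 2 - 1) * (1 - ‖r‖ ^ 2) := by
    apply mul_nonneg <;> nlinarith [norm_nonneg r]
  exact pow_le_pow_iff_left₀ (norm_nonneg _) (norm_nonneg _) two_ne_zero |>.mp (by linarith)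

theorem conjReverse_eq_reflect (φ : ℂ[X]) :
    conjReverse φ = reflect φ.natDegree (φ.map conj) := by
  rw [conjReverse, reverse, natDegree_map]

theorem coeff_zero_conjReverse (φ : ℂ[X]) : (conjReverse φ).coeff 0 = conj φ.leadingCoeff := by
  rw [conjReverse, coeff_zero_reverse, leadingCoeff_map]

theorem norm_coeff_zero_conjReverse (φ : ℂ[X]) :
    ‖(conjReverse φ).coeff 0‖ = ‖φ.leadingCoeff‖ := by
  rw [coeff_zero_conjReverse, Complex.norm_conj]

theorem coeff_natDegree_conjReverse (φ : ℂ[X]) :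
    (conjReverse φ).coeff φ.natDegree = conj (φ.coeff 0) := by
  rw [conjReverse_eq_reflect, coeff_reflect, revAt_le le_rfl, Nat.sub_self, coeff_map]

theorem natDegree_conjReverse_le (φ : ℂ[X]) : (conjReverse φ).natDegree ≤ φ.natDegree :=
  (reverse_natDegree_le _).trans (natDegree_map _).le

theorem eval_conjReverse (φ : ℂ[X]) {z : ℂ} (hz : z ≠ 0) :
    (conjReverse φ).eval z = z ^ φ.natDegree * conj (φ.eval (conj z)⁻¹) := by
  have : Invertible z⁻¹ := invertibleOfNonzero (inv_ne_zero hz)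
  have h := eval₂_reverse_mul_pow (RingHom.id ℂ) z⁻¹ (φ.map conj)
  rw [invOf_eq_inv, inv_inv, natDegree_map, eval₂_id, eval₂_id] at h
  rw [conjReverse, ← map_inv₀, ← eval₂_at_apply, ← eval_map, Complex.conj_conj, ← h, mul_comm,
    mul_assoc, ← mul_pow, inv_mul_cancel₀ hz, one_pow, mul_one]

theorem conjReverse_C_mul_sub_C_mul_conjReverse {f : ℂ[X]} {α β : ℂ}
    (h : (C α * f - C β * conjReverse f).natDegree = f.natDegree) :
    conjReverse (C α * f - C β * conjReverse f)
      = C (conj α) * conjReverse f - C (conj β) * f := by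
  have hinv : reflect f.natDegree ((conjReverse f).map conj) = f := by
    rw [conjReverse_eq_reflect, ← reflect_map, map_map, RingHomCompTriple.comp_eq, map_id,
      reflect_reflect]
  rw [conjReverse_eq_reflect, h, Polynomial.map_sub, Polynomial.map_mul, Polynomial.map_mul,
    map_C, map_C, reflect_sub, reflect_C_mul, reflect_C_mul, hinv, ← conjReverse_eq_reflect]

theorem IsSchurPoly.of_dvd {f g : ℂ[X]} (hf : IsSchurPoly f) (hgf : g ∣ f) : IsSchurPoly g :=
  fun z hz => hf z (hz.dvd hgf)

theorem IsSchurPoly.mul {f g : ℂ[X]} (hf : IsSchurPoly f) (hg : IsSchurPoly g) :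
    IsSchurPoly (f * g) := fun z hz => by
  rcases (root_mul.mp hz) with hfz | hgz
  exacts [hf z hfz, hg z hgz]

theorem isSchurPoly_X : IsSchurPoly X := fun z hz => by
  rw [IsRoot, eval_X] at hz
  simp [hz]

theorem IsSchurPoly.norm_eval_conjReverse_le {f : ℂ[X]} (hs : IsSchurPoly f) {z : ℂ}
    (hz : 1 ≤ ‖z‖) : ‖(conjReverse f).eval z‖ ≤ ‖f.eval z‖ := by
  have hz0 : z ≠ 0 := norm_pos_iff.mp (one_pos.trans_le hz)
  rw [eval_conjReverse f hz0, norm_mul, norm_pow, Complex.norm_conj,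
    norm_eval_eq_norm_leadingCoeff_mul_prod_roots, norm_eval_eq_norm_leadingCoeff_mul_prod_roots,
    (IsAlgClosed.splits f).natDegree_eq_card_roots, ← Multiset.prod_replicate,
    ← Multiset.map_const' f.roots, mul_left_comm, ← Multiset.prod_map_mul]
  refine mul_le_mul_of_nonneg_left (Multiset.prod_map_le_prod_map₀ _ _
    (fun _ _ => by positivity) fun r hr => ?_) (norm_nonneg _)
  calc ‖z‖ * ‖(conj z)⁻¹ - r‖ = ‖1 - conj z * r‖ := by
        rw [← Complex.norm_conj z, ← norm_mul, mul_sub, mul_inv_cancel₀ (by simpa using hz0)]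
    _ ≤ ‖z - r‖ :=
        Complex.norm_one_sub_conj_mul_le_norm_sub (hs r (isRoot_of_mem_roots hr)).le hz

theorem IsSchurPoly.norm_coeff_zero_lt_norm_leadingCoeff {f : ℂ[X]} (hs : IsSchurPoly f)
    (hf : f ≠ 0) (hd : 1 ≤ f.natDegree) : ‖f.coeff 0‖ < ‖f.leadingCoeff‖ := by
  rw [coeff_zero_eq_eval_zero, norm_eval_eq_norm_leadingCoeff_mul_prod_roots]
  have hroots : f.roots ≠ 0 := by
    rw [← Multiset.card_pos, ← (IsAlgClosed.splits f).natDegree_eq_card_roots]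
    exact hd
  simp only [zero_sub, norm_neg]
  exact mul_lt_of_lt_one_right (norm_pos_iff.mpr (leadingCoeff_ne_zero.mpr hf))
    (Multiset.prod_map_norm_lt_one hroots fun r hr => hs r (isRoot_of_mem_roots hr))

theorem IsSchurPoly.C_mul_sub_C_mul_conjReverse {f : ℂ[X]} (hs : IsSchurPoly f) {α β : ℂ}
    (hαβ : ‖β‖ < ‖α‖) : IsSchurPoly (C α * f - C β * conjReverse f) := by
  intro z hz
  by_contra! hz1
  have hfz : 0 < ‖f.eval z‖ := norm_pos_iff.mpr fun h => (hs z h).not_ge hz1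
  have heq : α * f.eval z = β * (conjReverse f).eval z := by simpa [sub_eq_zero] using hz
  have hlt : ‖β‖ * ‖(conjReverse f).eval z‖ < ‖α‖ * ‖f.eval z‖ :=
    calc ‖β‖ * ‖(conjReverse f).eval z‖ ≤ ‖β‖ * ‖f.eval z‖ :=
          mul_le_mul_of_nonneg_left (hs.norm_eval_conjReverse_le hz1) (norm_nonneg β)
      _ < ‖α‖ * ‖f.eval z‖ := mul_lt_mul_of_pos_right hαβ hfz
  rw [← norm_mul, ← norm_mul, heq] at hlt
  exact hlt.false

noncomputable def schurNumerator (φ : ℂ[X]) : ℂ[X] :=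
  C ((conjReverse φ).coeff 0) * φ - C (φ.coeff 0) * conjReverse φ

theorem schurStep_mul_X (φ : ℂ[X]) : schurStep φ * X = schurNumerator φ := by
  have h0 : (schurNumerator φ).coeff 0 = 0 := by
    simp only [schurNumerator, coeff_sub, coeff_C_mul]
    ring
  have h := divX_mul_X_add (schurNumerator φ)
  rw [h0, C_0, add_zero] at h
  exact h

theorem coeff_natDegree_schurNumerator (φ : ℂ[X]) :
    (schurNumerator φ).coeff φ.natDegree = ((‖φ.leadingCoeff‖ ^ 2 - ‖φ.coeff 0‖ ^ 2 : ℝ) : ℂ) := by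
  rw [schurNumerator, coeff_sub, coeff_C_mul, coeff_C_mul, coeff_natDegree_conjReverse,
    coeff_zero_conjReverse, coeff_natDegree, Complex.conj_mul', Complex.mul_conj']
  push_cast
  ring

section SchurStep

variable {φ : ℂ[X]}

theorem one_le_natDegree_of_norm_coeff_zero_lt (hb : ‖φ.coeff 0‖ < ‖φ.leadingCoeff‖) :
    1 ≤ φ.natDegree := by
  by_contra! h
  rw [leadingCoeff, Nat.lt_one_iff.mp h] at hb
  exact hb.false

theorem natDegree_schurNumerator (hb : ‖φ.coeff 0‖ < ‖φ.leadingCoeff‖) :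
    (schurNumerator φ).natDegree = φ.natDegree := by
  have hlead : (schurNumerator φ).coeff φ.natDegree ≠ 0 := by
    rw [coeff_natDegree_schurNumerator, Complex.ofReal_ne_zero, sub_ne_zero]
    exact (pow_lt_pow_left₀ hb (norm_nonneg _) two_ne_zero).ne'
  refine le_antisymm ?_ (le_natDegree_of_ne_zero hlead)
  exact (natDegree_sub_le _ _).trans (max_le (natDegree_C_mul_le _ _)
    ((natDegree_C_mul_le _ _).trans (natDegree_conjReverse_le φ)))

theorem natDegree_schurStep (hb : ‖φ.coeff 0‖ < ‖φ.leadingCoeff‖) :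
    (schurStep φ).natDegree = φ.natDegree - 1 := by
  rw [← natDegree_schurNumerator hb]
  exact natDegree_divX_eq_natDegree_tsub_one

theorem schurStep_ne_zero (hb : ‖φ.coeff 0‖ < ‖φ.leadingCoeff‖) : schurStep φ ≠ 0 := by
  intro h
  have h1 := one_le_natDegree_of_norm_coeff_zero_lt hb
  rw [← natDegree_schurNumerator hb, ← schurStep_mul_X, h, zero_mul, natDegree_zero] at h1
  exact Nat.not_succ_le_zero 0 h1

theorem C_mul_sub_C_mul_conjReverse_schurNumerator (hb : ‖φ.coeff 0‖ < ‖φ.leadingCoeff‖) :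
    C φ.leadingCoeff * schurNumerator φ - C (-φ.coeff 0) * conjReverse (schurNumerator φ)
      = C ((‖φ.leadingCoeff‖ ^ 2 - ‖φ.coeff 0‖ ^ 2 : ℝ) : ℂ) * φ := by
  rw [schurNumerator, conjReverse_C_mul_sub_C_mul_conjReverse (natDegree_schurNumerator hb),
    coeff_zero_conjReverse, Complex.conj_conj, Complex.ofReal_sub, Complex.ofReal_pow,
    Complex.ofReal_pow, ← Complex.mul_conj', ← Complex.mul_conj']
  simp only [C_sub, C_mul, map_neg]
  ring

theorem isSchurPoly_schurStep (hs : IsSchurPoly φ) (hb : ‖φ.coeff 0‖ < ‖φ.leadingCoeff‖) :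
    IsSchurPoly (schurStep φ) := by
  refine IsSchurPoly.of_dvd ?_ (Dvd.intro X (schurStep_mul_X φ))
  exact hs.C_mul_sub_C_mul_conjReverse (by rwa [norm_coeff_zero_conjReverse])

theorem IsSchurPoly.of_schurStep (hs : IsSchurPoly (schurStep φ))
    (hb : ‖φ.coeff 0‖ < ‖φ.leadingCoeff‖) : IsSchurPoly φ := by
  have hψ : IsSchurPoly (schurNumerator φ) := schurStep_mul_X φ ▸ hs.mul isSchurPoly_X
  have hφ := hψ.C_mul_sub_C_mul_conjReverse (α := φ.leadingCoeff) (β := -φ.coeff 0)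
    (by rwa [norm_neg])
  rw [C_mul_sub_C_mul_conjReverse_schurNumerator hb] at hφ
  exact hφ.of_dvd (dvd_mul_left φ _)

end SchurStep

theorem stmt_17 (φ : Polynomial ℂ) (d : ℕ) (hd : 1 ≤ d) :
    (φ ≠ 0 ∧ φ.natDegree = d ∧ IsSchurPoly φ) ↔
      (schurStep φ ≠ 0 ∧ (schurStep φ).natDegree = d - 1 ∧ IsSchurPoly (schurStep φ) ∧
        ‖φ.coeff 0‖ < ‖(conjReverse φ).coeff 0‖) := by
  rw [norm_coeff_zero_conjReverse]
  constructor
  · rintro ⟨hφ, rfl, hs⟩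
    have hb := hs.norm_coeff_zero_lt_norm_leadingCoeff hφ hd
    exact ⟨schurStep_ne_zero hb, natDegree_schurStep hb, isSchurPoly_schurStep hs hb, hb⟩
  · rintro ⟨-, hdeg, hs, hb⟩
    have hφ := one_le_natDegree_of_norm_coeff_zero_lt hb
    refine ⟨ne_zero_of_natDegree_gt hφ, ?_, hs.of_schurStep hb⟩
    have := natDegree_schurStep hb
    omega
end

section
/- For real q with 0 < q ≤ 2 and real s > 0, with ε_s' = 1 and parameter ω = s, the quartic polynomial φ₀(Z) = (Z² - (2-q)Z + 1)((1+ω)Z² - 2Z + (1+ω)) has all roots on the closed unit disk, and if q ≠ 2ω/(1+ω) all roots of modulus 1 are simple. -/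
open Polynomial

private lemma abs_mk_aux (x y : ℝ) (h : x^2 + y^2 = 1) :
    ‖(x:ℂ) + (y:ℂ)*Complex.I‖ = 1 := by
  rw [Complex.norm_def, Complex.normSq_apply]
  simp only [Complex.add_re, Complex.ofReal_re, Complex.mul_re, Complex.I_re, Complex.I_im,
    Complex.ofReal_im, Complex.add_im, Complex.mul_im]
  rw [show x + (y * 0 - 0 * 1) = x by ring, show 0 + (y * 1 + 0 * 0) = y by ring]
  rw [show x * x + y * y = 1 by nlinarith]
  exact Real.sqrt_one

set_option maxHeartbeats 1000000 in
theorem stmt_18 (q ω : ℝ) (hq0 : 0 < q) (hq2 : q ≤ 2) (hω : 0 < ω) :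
    (∀ z : ℂ,
        ((X ^ 2 - C ((2 - q : ℝ) : ℂ) * X + 1) *
            (C ((1 + ω : ℝ) : ℂ) * X ^ 2 - 2 * X + C ((1 + ω : ℝ) : ℂ))).IsRoot z →
        ‖z‖ ≤ 1) ∧
    (q ≠ 2 * ω / (1 + ω) → ∀ z : ℂ,
        ((X ^ 2 - C ((2 - q : ℝ) : ℂ) * X + 1) *
            (C ((1 + ω : ℝ) : ℂ) * X ^ 2 - 2 * X + C ((1 + ω : ℝ) : ℂ))).IsRoot z →
        ‖z‖ = 1 →
        ((X ^ 2 - C ((2 - q : ℝ) : ℂ) * X + 1) *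
            (C ((1 + ω : ℝ) : ℂ) * X ^ 2 - 2 * X + C ((1 + ω : ℝ) : ℂ))).rootMultiplicity z
          = 1) := by
  have hω1 : (0:ℝ) < 1 + ω := by linarith
  set a : ℝ := (2 - q) / 2 with ha_def
  set e : ℝ := 1 / (1 + ω) with he_def
  have ha0 : 0 ≤ a := by rw [ha_def]; linarith
  have ha1 : a < 1 := by rw [ha_def]; linarith
  have he0 : 0 < e := by rw [he_def]; positivity
  have he1 : e < 1 := by
    rw [he_def, div_lt_one hω1]; linarith
  set b : ℝ := Real.sqrt (1 - a^2) with hb_def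
  set d : ℝ := Real.sqrt (1 - e^2) with hd_def
  have hb2 : b^2 = 1 - a^2 := Real.sq_sqrt (by nlinarith)
  have hd2 : d^2 = 1 - e^2 := Real.sq_sqrt (by nlinarith)
  have hbpos : 0 < b := Real.sqrt_pos.mpr (by nlinarith)
  have hdpos : 0 < d := Real.sqrt_pos.mpr (by nlinarith)
  set z₁ : ℂ := (a:ℂ) + (b:ℂ)*Complex.I with hz₁
  set w₁ : ℂ := (a:ℂ) + ((-b:ℝ):ℂ)*Complex.I with hw₁
  set z₂ : ℂ := (e:ℂ) + (d:ℂ)*Complex.I with hz₂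
  set w₂ : ℂ := (e:ℂ) + ((-d:ℝ):ℂ)*Complex.I with hw₂
  have hsum1 : z₁ + w₁ = ((2 - q : ℝ) : ℂ) := by
    rw [hz₁, hw₁, ha_def]; push_cast; ring
  have hprod1 : z₁ * w₁ = 1 := by
    rw [hz₁, hw₁]
    have : ((a:ℂ) + (b:ℂ)*Complex.I) * ((a:ℂ) + ((-b:ℝ):ℂ)*Complex.I)
        = ((a:ℂ)^2 + (b:ℂ)^2) - ((b:ℂ)^2) * (Complex.I^2 + 1) := by push_cast; ring
    rw [this, Complex.I_sq]
    rw [show ((a:ℝ):ℂ)^2 + ((b:ℝ):ℂ)^2 = (((a^2 + b^2 : ℝ)):ℂ) by push_cast; ring]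
    rw [show a^2 + b^2 = 1 by nlinarith]
    simp
  have hsum2 : z₂ + w₂ = ((2 * e : ℝ) : ℂ) := by
    rw [hz₂, hw₂]; push_cast; ring
  have hprod2 : z₂ * w₂ = 1 := by
    rw [hz₂, hw₂]
    have : ((e:ℂ) + (d:ℂ)*Complex.I) * ((e:ℂ) + ((-d:ℝ):ℂ)*Complex.I)
        = ((e:ℂ)^2 + (d:ℂ)^2) - ((d:ℂ)^2) * (Complex.I^2 + 1) := by push_cast; ring
    rw [this, Complex.I_sq]
    rw [show ((e:ℝ):ℂ)^2 + ((d:ℝ):ℂ)^2 = (((e^2 + d^2 : ℝ)):ℂ) by push_cast; ring]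
    rw [show e^2 + d^2 = 1 by nlinarith]
    simp
  -- factorizations
  have hfac1 : (X ^ 2 - C ((2 - q : ℝ) : ℂ) * X + 1 : ℂ[X]) = (X - C z₁) * (X - C w₁) := by
    have h : (X - C z₁) * (X - C w₁)
        = X^2 - (C z₁ + C w₁) * X + C z₁ * C w₁ := by ring
    rw [h, ← C_add, ← C_mul, hsum1, hprod1, map_one]
  have hk2 : ((1 + ω : ℝ) : ℂ) * ((2 * e : ℝ) : ℂ) = 2 := by
    have h2 : (1 + ω) * (2 * e) = 2 := by rw [he_def]; field_simp
    rw [← Complex.ofReal_mul, h2]; norm_num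
  have hfac2 : (C ((1 + ω : ℝ) : ℂ) * X ^ 2 - 2 * X + C ((1 + ω : ℝ) : ℂ) : ℂ[X])
      = C ((1 + ω : ℝ) : ℂ) * ((X - C z₂) * (X - C w₂)) := by
    have h : C ((1 + ω : ℝ) : ℂ) * ((X - C z₂) * (X - C w₂))
        = C ((1 + ω : ℝ) : ℂ) * X^2 - (C ((1 + ω : ℝ) : ℂ) * (C z₂ + C w₂)) * X
          + C ((1 + ω : ℝ) : ℂ) * (C z₂ * C w₂) := by ring
    rw [h, ← C_add, hsum2, ← C_mul, hk2, ← C_mul, hprod2, map_one, mul_one]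
    rw [show (C 2 : ℂ[X]) = 2 from map_ofNat (C : ℂ →+* ℂ[X]) 2]
  have hkne : ((1 + ω : ℝ) : ℂ) ≠ 0 := by
    simp only [ne_eq, Complex.ofReal_eq_zero]; linarith
  have habs : ∀ x y : ℝ, x^2 + y^2 = 1 → ‖(x:ℂ) + (y:ℂ)*Complex.I‖ = 1 :=
    abs_mk_aux
  have hroot_cases : ∀ z : ℂ,
      ((X ^ 2 - C ((2 - q : ℝ) : ℂ) * X + 1) *
          (C ((1 + ω : ℝ) : ℂ) * X ^ 2 - 2 * X + C ((1 + ω : ℝ) : ℂ))).IsRoot z →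
      z = z₁ ∨ z = w₁ ∨ z = z₂ ∨ z = w₂ := by
    intro z hz
    rw [IsRoot, hfac1, hfac2] at hz
    simp only [eval_mul, eval_sub, eval_add, eval_X, eval_C, eval_pow, mul_eq_zero,
      sub_eq_zero] at hz
    tauto
  have habs1 : ‖z₁‖ = 1 := habs a b (by nlinarith)
  have habsw1 : ‖w₁‖ = 1 := habs a (-b) (by nlinarith)
  have habs2 : ‖z₂‖ = 1 := habs e d (by nlinarith)
  have habsw2 : ‖w₂‖ = 1 := habs e (-d) (by nlinarith)
  constructor
  · intro z hz
    rcases hroot_cases z hz with h | h | h | h <;> rw [h]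
    · rw [habs1]
    · rw [habsw1]
    · rw [habs2]
    · rw [habsw2]
  · intro hq z hz _
    -- distinctness
    have hae : a ≠ e := by
      intro h
      apply hq
      rw [ha_def, he_def] at h
      field_simp at h ⊢
      linarith
    have him : ∀ x y : ℝ, ((x:ℂ) + (y:ℂ)*Complex.I).re = x := by
      intro x y; simp
    have hne11 : z₁ ≠ w₁ := by
      intro h
      have := congrArg Complex.im h
      simp [hz₁, hw₁] at this
      linarith
    have hne22 : z₂ ≠ w₂ := by
      intro h
      have := congrArg Complex.im h
      simp [hz₂, hw₂] at this
      linarith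
    have hne12 : z₁ ≠ z₂ := by
      intro h; exact hae (by simpa [hz₁, hz₂] using congrArg Complex.re h)
    have hne1w2 : z₁ ≠ w₂ := by
      intro h; exact hae (by simpa [hz₁, hw₂] using congrArg Complex.re h)
    have hnew12 : w₁ ≠ z₂ := by
      intro h; exact hae (by simpa [hw₁, hz₂] using congrArg Complex.re h)
    have hnew1w2 : w₁ ≠ w₂ := by
      intro h; exact hae (by simpa [hw₁, hw₂] using congrArg Complex.re h)
    classical
    rw [← count_roots]
    have hrw : ((X ^ 2 - C ((2 - q : ℝ) : ℂ) * X + 1) *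
        (C ((1 + ω : ℝ) : ℂ) * X ^ 2 - 2 * X + C ((1 + ω : ℝ) : ℂ)) : ℂ[X])
        = C ((1 + ω : ℝ) : ℂ) * ((X - C z₁) * (X - C w₁) * ((X - C z₂) * (X - C w₂))) := by
      rw [hfac1, hfac2]; ring
    have hne : ∀ u : ℂ, (X - C u : ℂ[X]) ≠ 0 := fun u => X_sub_C_ne_zero u
    have hroots : ((X ^ 2 - C ((2 - q : ℝ) : ℂ) * X + 1) *
        (C ((1 + ω : ℝ) : ℂ) * X ^ 2 - 2 * X + C ((1 + ω : ℝ) : ℂ)) : ℂ[X]).roots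
        = {z₁} + {w₁} + ({z₂} + {w₂}) := by
      rw [hrw, roots_C_mul _ hkne, roots_mul (mul_ne_zero (mul_ne_zero (hne z₁) (hne w₁))
        (mul_ne_zero (hne z₂) (hne w₂))), roots_mul (mul_ne_zero (hne z₁) (hne w₁)),
        roots_mul (mul_ne_zero (hne z₂) (hne w₂)), roots_X_sub_C, roots_X_sub_C,
        roots_X_sub_C, roots_X_sub_C]
    rw [hroots]
    rcases hroot_cases z hz with h | h | h | h <;> subst h <;>
      simp [Multiset.count_add, Multiset.count_singleton, hne11, hne22, hne12, hne1w2,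
        hnew12, hnew1w2, hne11.symm, hne22.symm, hne12.symm, hne1w2.symm, hnew12.symm,
        hnew1w2.symm]
end
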